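/- arXiv:2605.04464 — 4 statements merged into one kernel-verified Lean document; each statement's English description precedes it below -/
import Mathlib

section
/- Let D be a division ring whose center F is a finite field with q elements, and let n ≥ 2 be an integer with q > n. Then for every matrix A ∈ M_n(D) there exists a scalar λ ∈ F such that A − λ·I_n is an invertible matrix in M_n(D). -/
open Matrix MulOpposite

namespace Stmt8Aux

variable {D : Type*} [DivisionRing D] {n : ℕ}

/-- `mulVec` as a `Dᵐᵒᵖ`-linear map. -/
def mv (B : Matrix (Fin n) (Fin n) D) : (Fin n → D) →ₗ[Dᵐᵒᵖ] (Fin n → D) where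
  toFun v := B *ᵥ v
  map_add' x y := B.mulVec_add x y
  map_smul' c v := B.mulVec_smul c v

/-- `op : D ≃ₗ[Dᵐᵒᵖ] Dᵐᵒᵖ`. -/
def opEquiv : D ≃ₗ[Dᵐᵒᵖ] Dᵐᵒᵖ where
  toFun := op
  invFun := unop
  left_inv x := rfl
  right_inv x := rfl
  map_add' x y := rfl
  map_smul' c x := by
    simp only [RingHom.id_apply]
    rw [MulOpposite.smul_eq_mul_unop, op_mul, op_unop, smul_eq_mul]

/-- A basis of `Fin n → D` over `Dᵐᵒᵖ`. -/
noncomputable def bD (n : ℕ) (D : Type*) [DivisionRing D] :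
    Module.Basis (Fin n) Dᵐᵒᵖ (Fin n → D) :=
  (Pi.basisFun Dᵐᵒᵖ (Fin n)).map
    (LinearEquiv.piCongrRight fun _ : Fin n => (opEquiv (D := D))).symm

instance : Module.Finite Dᵐᵒᵖ (Fin n → D) := Module.Finite.of_basis (bD n D)

lemma finrank_pi_op : Module.finrank Dᵐᵒᵖ (Fin n → D) = n := by
  simpa using Module.finrank_eq_card_basis (bD n D)

/-- A non-invertible matrix over a division ring kills a nonzero vector. -/
lemma exists_ker (B : Matrix (Fin n) (Fin n) D) (h : ¬ IsUnit B) :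
    ∃ v : Fin n → D, v ≠ 0 ∧ B *ᵥ v = 0 := by
  by_contra hcon
  push_neg at hcon
  apply h
  have hinj : Function.Injective (mv B) := by
    rw [injective_iff_map_eq_zero]
    intro v hv
    by_contra hv0
    exact hcon v hv0 hv
  have hsurj : Function.Surjective (mv B) :=
    (LinearMap.injective_iff_surjective).mp hinj
  let e := LinearEquiv.ofBijective (mv B) ⟨hinj, hsurj⟩
  let C : Matrix (Fin n) (Fin n) D := Matrix.of fun i j => e.symm (Pi.single j 1) i
  have hmv : ∀ v, mv B v = B *ᵥ v := fun _ => rfl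
  have hCg : ∀ v : Fin n → D, C *ᵥ v = e.symm v := by
    intro v
    have hv : v = ∑ j, op (v j) • (Pi.single j 1 : Fin n → D) := by
      funext k
      simp [Finset.sum_apply, MulOpposite.smul_eq_mul_unop, Pi.single_apply, ite_mul]
    calc C *ᵥ v = ∑ j, op (v j) • e.symm (Pi.single j 1) := by
          funext i
          simp only [mulVec, dotProduct, Finset.sum_apply, Pi.smul_apply,
            MulOpposite.smul_eq_mul_unop, unop_op]
          rfl
      _ = e.symm (∑ j, op (v j) • (Pi.single j 1 : Fin n → D)) := by
          simp only [map_sum, _root_.map_smul]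
      _ = e.symm v := by rw [← hv]
  have key : ∀ (M : Matrix (Fin n) (Fin n) D), (∀ v, M *ᵥ v = v) → M = 1 := by
    intro M hM
    ext i j
    have h1 := congrFun (hM (Pi.single j 1)) i
    simp only [mulVec_single, mul_one, op_one, one_smul, Matrix.col_apply] at h1
    rw [h1, Matrix.one_apply, Pi.single_apply]
  have hBC : B * C = 1 := by
    apply key
    intro v
    rw [← mulVec_mulVec, hCg, ← hmv]
    exact e.apply_symm_apply v
  have hCB : C * B = 1 := by
    apply key
    intro v
    rw [← mulVec_mulVec, ← hmv, hCg]
    exact e.symm_apply_apply v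
  exact ⟨⟨B, C, hBC, hCB⟩, rfl⟩

lemma mulVec_central_smul (B : Matrix (Fin n) (Fin n) D) {c : D}
    (hcen : c ∈ Subring.center D) (v : Fin n → D) :
    B *ᵥ (c • v) = c • (B *ᵥ v) := by
  funext i
  simp only [mulVec, dotProduct, Pi.smul_apply, smul_eq_mul, Finset.mul_sum]
  refine Finset.sum_congr rfl fun j _ => ?_
  rw [← mul_assoc, Subring.mem_center_iff.mp hcen (B i j), mul_assoc]

/-- Independence of eigenvectors with distinct central eigenvalues. -/
lemma eig_indep (A : Matrix (Fin n) (Fin n) D)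
    {ι : Type*} [DecidableEq ι] (s : Finset ι) (lam : ι → D)
    (hcen : ∀ i, lam i ∈ Subring.center D)
    (hd : ∀ i ∈ s, ∀ j ∈ s, lam i = lam j → i = j)
    (v : ι → Fin n → D) (hv : ∀ i ∈ s, A *ᵥ v i = lam i • v i)
    (hsum : ∑ i ∈ s, v i = 0) : ∀ i ∈ s, v i = 0 := by
  induction s using Finset.induction_on generalizing v with
  | empty => intro i hi; exact absurd hi (Finset.notMem_empty i)
  | @insert j s hj ih =>
    set u : ι → Fin n → D := fun i => (lam i - lam j) • v i with hu
    have hmvA : ∀ x, A *ᵥ x = mv A x := fun _ => rfl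
    have husum : ∑ i ∈ s, u i = 0 := by
      have h1 : ∑ i ∈ insert j s, u i = 0 := by
        have heq : ∀ i ∈ insert j s, u i = A *ᵥ v i - lam j • v i := by
          intro i hi
          rw [hu]
          simp only
          rw [hv i hi, sub_smul]
        rw [Finset.sum_congr rfl heq, Finset.sum_sub_distrib]
        simp only [hmvA]
        rw [← map_sum, ← Finset.smul_sum, hsum, map_zero, smul_zero, sub_zero]
      rw [Finset.sum_insert hj] at h1
      have huj : u j = 0 := by simp [hu]
      rw [huj, zero_add] at h1
      exact h1
    have hd' : ∀ i ∈ s, ∀ k ∈ s, lam i = lam k → i = k := fun i hi k hk h =>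
      hd i (Finset.mem_insert_of_mem hi) k (Finset.mem_insert_of_mem hk) h
    have hueig : ∀ i ∈ s, A *ᵥ u i = lam i • u i := by
      intro i hi
      rw [hu]
      simp only
      rw [mulVec_central_smul A (Subring.sub_mem _ (hcen i) (hcen j)),
        hv i (Finset.mem_insert_of_mem hi), smul_smul, smul_smul,
        Subring.mem_center_iff.mp (hcen i) (lam i - lam j)]
    have hz : ∀ i ∈ s, u i = 0 := ih hd' u hueig husum
    have hvz : ∀ i ∈ s, v i = 0 := by
      intro i his
      have h0 := hz i his
      rw [hu] at h0
      simp only at h0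
      have hne : lam i - lam j ≠ 0 := by
        intro hsub
        exact hj (by rwa [hd i (Finset.mem_insert_of_mem his) j (Finset.mem_insert_self j s)
          (sub_eq_zero.mp hsub)] at his)
      funext k
      have h2 := congrFun h0 k
      simp only [Pi.smul_apply, smul_eq_mul, Pi.zero_apply] at h2
      exact (mul_eq_zero.mp h2).resolve_left hne
    intro i hi
    rcases Finset.mem_insert.mp hi with rfl | his
    · rw [Finset.sum_insert hj, Finset.sum_eq_zero hvz, add_zero] at hsum
      exact hsum
    · exact hvz i his

end Stmt8Aux

open Stmt8Aux in
/-- Let `D` be a division ring whose center is a finite field with `q`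
elements, and let `n ≥ 2` with `q > n`. Then for every `A ∈ M_n(D)` there is a central
scalar `λ` such that `A - λ·I_n` is invertible. -/
theorem stmt_8 (D : Type*) [DivisionRing D] (q n : ℕ)
    (hq : Nat.card (Subring.center D) = q) (hn : 2 ≤ n) (hqn : n < q)
    (A : Matrix (Fin n) (Fin n) D) :
    ∃ l : Subring.center D,
      IsUnit (A - (l : D) • (1 : Matrix (Fin n) (Fin n) D)) := by
  by_contra hcon
  push_neg at hcon
  have hfin : Finite (Subring.center D) := by
    apply Nat.finite_of_card_ne_zero
    rw [hq]; omega
  have : Fintype (Subring.center D) := Fintype.ofFinite _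
  obtain ⟨emb⟩ : Nonempty (Fin (n + 1) ↪ Subring.center D) := by
    apply Function.Embedding.nonempty_of_card_le
    rw [Fintype.card_fin, ← Nat.card_eq_fintype_card, hq]
    omega
  have hw : ∀ i : Fin (n + 1), ∃ w : Fin n → D, w ≠ 0 ∧
      A *ᵥ w = ((emb i : D)) • w := by
    intro i
    obtain ⟨w, hw0, hwk⟩ := exists_ker _ (hcon (emb i))
    refine ⟨w, hw0, ?_⟩
    rw [Matrix.sub_mulVec, Matrix.smul_mulVec, Matrix.one_mulVec,
      sub_eq_zero] at hwk
    exact hwk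
  choose w hw0 hweig using hw
  have hli : LinearIndependent Dᵐᵒᵖ w := by
    rw [linearIndependent_iff']
    intro s g hg i hi
    have heig : ∀ i ∈ s, A *ᵥ (g i • w i) = (emb i : D) • (g i • w i) := by
      intro i _
      rw [Matrix.mulVec_smul, hweig, smul_comm]
    have hz := eig_indep A s (fun i => (emb i : D)) (fun i => (emb i).2)
      (fun a _ b _ h => emb.injective (Subtype.ext h)) (fun i => g i • w i) heig hg i hi
    by_contra hgne
    apply hw0 i
    funext k
    have h2 := congrFun hz k
    simp only [Pi.smul_apply, MulOpposite.smul_eq_mul_unop, Pi.zero_apply] at h2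
    rcases mul_eq_zero.mp h2 with h | h
    · exact h
    · exact absurd ((MulOpposite.unop_eq_zero_iff (g i)).mp h) hgne
  have hcard := hli.fintype_card_le_finrank
  rw [Fintype.card_fin, finrank_pi_op] at hcard
  omega
end

section
/- Let D be a division ring with center F, let n ≥ 1, let B ∈ M_n(D), let α be an n×1 column over D, and let a ∈ D. Suppose there exists a polynomial p in one variable with coefficients in F such that p(B) = 0 (evaluating p at the matrix B) and p(a) ≠ 0. Then the (n+1)×(n+1) block matrix [[B, α],[0, a]] is similar to the block diagonal matrix [[B, 0],[0, a]]; that is, there exists an invertible matrix P ∈ M_{n+1}(D) with P⁻¹·[[B, α],[0, a]]·P = [[B, 0],[0, a]]. -/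
open Polynomial Matrix Finset

section aux
variable {D : Type*} [DivisionRing D] {n : ℕ}

private lemma e1_mul (x y : D) :
    (Matrix.of fun _ _ => x : Matrix (Fin 1) (Fin 1) D) * (Matrix.of fun _ _ => y) =
      Matrix.of fun _ _ => x * y := by
  ext i j
  simp [Matrix.mul_apply]

private lemma e1_pow (x : D) (m : ℕ) :
    ((Matrix.of fun _ _ => x : Matrix (Fin 1) (Fin 1) D)) ^ m =
      Matrix.of fun _ _ => x ^ m := by
  induction m with
  | zero => ext i j; fin_cases i; fin_cases j; simp [Matrix.one_apply]
  | succ m ih => rw [pow_succ, ih, e1_mul, ← pow_succ]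

private lemma e1_add (x y : D) :
    (Matrix.of fun _ _ => x + y : Matrix (Fin 1) (Fin 1) D) =
      (Matrix.of fun _ _ => x) + (Matrix.of fun _ _ => y) := by
  ext i j; simp

private lemma algC_mul (c : Subring.center D) (X : Matrix (Fin n) (Fin 1) D) :
    (algebraMap (Subring.center D) (Matrix (Fin n) (Fin n) D) c) * X =
      X * (Matrix.of fun _ _ => (c : D) : Matrix (Fin 1) (Fin 1) D) := by
  ext i j
  fin_cases j
  simp [Matrix.mul_apply, Matrix.algebraMap_matrix_apply]
  exact congrArg (· * X i 0) rfl |>.trans (Subring.mem_center_iff.mp c.2 (X i 0)).symm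

private lemma key (B : Matrix (Fin n) (Fin n) D) (a : D)
    (p : Polynomial (Subring.center D)) (X : Matrix (Fin n) (Fin 1) D) :
    ∃ W : Matrix (Fin n) (Fin 1) D,
      B * W - W * (Matrix.of fun _ _ => a : Matrix (Fin 1) (Fin 1) D) =
        (Polynomial.aeval B p) * X - X * (Matrix.of fun _ _ => (Polynomial.aeval a p : D) : Matrix (Fin 1) (Fin 1) D) := by
  induction p using Polynomial.induction_on' with
  | add p q hp hq =>
      obtain ⟨W₁, h₁⟩ := hp
      obtain ⟨W₂, h₂⟩ := hq
      refine ⟨W₁ + W₂, ?_⟩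
      rw [map_add, map_add, e1_add]
      calc B * (W₁ + W₂) - (W₁ + W₂) * (Matrix.of fun _ _ => a : Matrix (Fin 1) (Fin 1) D)
          = (B * W₁ - W₁ * (Matrix.of fun _ _ => a : Matrix (Fin 1) (Fin 1) D)) +
            (B * W₂ - W₂ * (Matrix.of fun _ _ => a : Matrix (Fin 1) (Fin 1) D)) := by
              rw [Matrix.mul_add, Matrix.add_mul]; abel
        _ = _ := by rw [h₁, h₂, Matrix.add_mul, Matrix.mul_add]; abel
  | monomial m c =>
      set A : Matrix (Fin 1) (Fin 1) D := Matrix.of fun _ _ => a with hA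
      set Cn := algebraMap (Subring.center D) (Matrix (Fin n) (Fin n) D) c with hCn
      refine ⟨∑ j ∈ Finset.range m, B ^ j * (Cn * X) * A ^ (m - 1 - j), ?_⟩
      have tele : B * (∑ j ∈ Finset.range m, B ^ j * (Cn * X) * A ^ (m - 1 - j)) -
          (∑ j ∈ Finset.range m, B ^ j * (Cn * X) * A ^ (m - 1 - j)) * A =
          B ^ m * (Cn * X) - (Cn * X) * A ^ m := by
        rw [Matrix.mul_sum, Matrix.sum_mul, ← Finset.sum_sub_distrib]
        have : ∀ j ∈ Finset.range m,
            B * (B ^ j * (Cn * X) * A ^ (m - 1 - j)) - B ^ j * (Cn * X) * A ^ (m - 1 - j) * A =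
            (fun j => B ^ j * (Cn * X) * A ^ (m - j)) (j + 1) -
            (fun j => B ^ j * (Cn * X) * A ^ (m - j)) j := by
          intro j hj
          simp only [Finset.mem_range] at hj
          have h1 : m - 1 - j = m - (j + 1) := by omega
          have h2 : m - (j + 1) + 1 = m - j := by omega
          simp only []
          rw [h1]
          congr 1
          · simp [pow_succ', Matrix.mul_assoc]
          · rw [Matrix.mul_assoc, ← pow_succ, h2]
        rw [Finset.sum_congr rfl this,
          Finset.sum_range_sub (fun j => B ^ j * (Cn * X) * A ^ (m - j))]
        simp
      rw [tele, Polynomial.aeval_monomial, Polynomial.aeval_monomial]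
      have hc : (algebraMap (Subring.center D) D) c = (c : D) := rfl
      have hcomm : Cn * B ^ m = B ^ m * Cn := Algebra.commutes c (B ^ m)
      have hXA : (Matrix.of fun _ _ => (c : D) * a ^ m : Matrix (Fin 1) (Fin 1) D) =
          (Matrix.of fun _ _ => (c : D)) * A ^ m := by rw [e1_pow, e1_mul]
      rw [hc, hXA, ← Matrix.mul_assoc X, ← algC_mul, ← hCn]
      simp only [← Matrix.mul_assoc, hcomm]

end aux

/-- Let `D` be a division ring with center `F`, `B ∈ M_n(D)`, `α` an
`n×1` column over `D`, and `a ∈ D`. If there is a polynomial `p ∈ F[x]` with `p(B) = 0`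
and `p(a) ≠ 0`, then the block matrix `[[B, α],[0, a]]` is similar to `[[B, 0],[0, a]]`:
there is an invertible `P` (with two-sided inverse `P'`) such that
`P' * [[B, α],[0, a]] * P = [[B, 0],[0, a]]`. -/
theorem stmt_10 (D : Type*) [DivisionRing D] (n : ℕ) (hn : 1 ≤ n)
    (B : Matrix (Fin n) (Fin n) D) (α : Matrix (Fin n) (Fin 1) D) (a : D)
    (p : Polynomial (Subring.center D))
    (hpB : Polynomial.aeval B p = 0)
    (hpa : Polynomial.aeval a p ≠ 0) :
    ∃ P P' : Matrix (Fin n ⊕ Fin 1) (Fin n ⊕ Fin 1) D,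
      P * P' = 1 ∧ P' * P = 1 ∧
      P' * Matrix.fromBlocks B α 0 (Matrix.of fun _ _ => a) * P =
        Matrix.fromBlocks B 0 0 (Matrix.of fun _ _ => a) := by
  obtain ⟨W, hW⟩ := key B a p (α * (Matrix.of fun _ _ => (Polynomial.aeval a p : D)⁻¹ : Matrix (Fin 1) (Fin 1) D))
  rw [hpB, Matrix.zero_mul, Matrix.mul_assoc, e1_mul, inv_mul_cancel₀ hpa] at hW
  have hW' : B * W - W * (Matrix.of fun _ _ => a : Matrix (Fin 1) (Fin 1) D) = -α := by
    rw [hW]; simp [show (Matrix.of fun _ _ => (1:D) : Matrix (Fin 1) (Fin 1) D) = 1 from by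
      ext i j; fin_cases i; fin_cases j; simp [Matrix.one_apply]]
  refine ⟨Matrix.fromBlocks 1 W 0 1, Matrix.fromBlocks 1 (-W) 0 1, ?_, ?_, ?_⟩
  · simp [Matrix.fromBlocks_multiply, ← Matrix.fromBlocks_one]
  · simp [Matrix.fromBlocks_multiply, ← Matrix.fromBlocks_one]
  · simp only [Matrix.fromBlocks_multiply]
    simp only [Matrix.one_mul, Matrix.mul_one, Matrix.zero_mul, Matrix.mul_zero,
      Matrix.neg_mul, Matrix.mul_neg, add_zero, zero_add]
    have : B * W + (α + -(W * (Matrix.of fun _ _ => a : Matrix (Fin 1) (Fin 1) D))) = 0 := by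
      have := hW'
      rw [sub_eq_iff_eq_add] at this
      rw [this]; abel
    rw [this]
end

section
/- Let D be a division ring and let V = ℕ →₀ D be the free left D-module on countably many generators. Then every finite-rank D-linear endomorphism A of V can be written as A = (B∘C − C∘B)∘(E∘G − G∘E) for some finite-rank D-linear endomorphisms B, C, E, G of V. -/
open Submodule LinearMap Cardinal

section Aux

variable {D : Type*} [DivisionRing D] {V : Type*} [AddCommGroup V] [Module D V]

/-- Extend a submodule disjoint from `B` to a full complement of `B`. -/
lemma aux_exists_isCompl_ge (B R : Submodule D V) (h : Disjoint B R) :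
    ∃ W : Submodule D V, IsCompl B W ∧ R ≤ W := by
  obtain ⟨W0, hW0⟩ := Submodule.exists_isCompl (B ⊔ R)
  refine ⟨R ⊔ W0, ⟨?_, ?_⟩, le_sup_left⟩
  · have hkey : (R ⊔ W0) ⊓ (R ⊔ B) = R := by
      rw [sup_inf_assoc_of_le W0 le_sup_left]
      have h0 : W0 ⊓ (R ⊔ B) = ⊥ := by
        rw [inf_comm, sup_comm]
        exact hW0.disjoint.eq_bot
      rw [h0, sup_bot_eq]
    rw [disjoint_iff]
    have h1 : B ⊓ (R ⊔ W0) ≤ R := by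
      calc B ⊓ (R ⊔ W0) ≤ (R ⊔ B) ⊓ (R ⊔ W0) := inf_le_inf_right _ le_sup_right
        _ = R := by rw [inf_comm]; exact hkey
    have h2 : B ⊓ (R ⊔ W0) ≤ B ⊓ R := le_inf inf_le_left h1
    exact le_bot_iff.mp (h.eq_bot ▸ h2)
  · rw [codisjoint_iff, ← sup_assoc]
    exact hW0.sup_eq_top

/-- Inside a submodule `K` of infinite rank one can find a finite-dimensional submodule of
any prescribed finite dimension which is disjoint from a given finite-dimensional `R`. -/
lemma aux_exists_sub_disjoint (K R : Submodule D V) (hK : ℵ₀ ≤ Module.rank D K)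
    [Module.Finite D R] (m : ℕ) :
    ∃ B1 : Submodule D V, B1 ≤ K ∧ Module.Finite D B1 ∧
      Module.finrank D B1 = m ∧ Disjoint B1 R := by
  classical
  set φ : K →ₗ[D] V ⧸ R := R.mkQ.comp K.subtype with hφ
  -- the kernel of φ embeds into R
  have hker_mem : ∀ x : LinearMap.ker φ, ((x : K) : V) ∈ R := by
    intro x
    have hx : φ (x : K) = 0 := LinearMap.mem_ker.mp x.2
    have hx2 : (Submodule.Quotient.mk (((x : K) : V)) : V ⧸ R) = 0 := hx
    exact (Submodule.Quotient.mk_eq_zero R).mp hx2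
  have hkerφ : Module.rank D (LinearMap.ker φ) < ℵ₀ := by
    set ψ : LinearMap.ker φ →ₗ[D] R :=
      LinearMap.codRestrict R (K.subtype.comp (LinearMap.ker φ).subtype) hker_mem with hψ
    have hinj : Function.Injective ψ := by
      intro a b hab
      have h' := congrArg Subtype.val hab
      exact Subtype.ext (Subtype.ext h')
    exact lt_of_le_of_lt (ψ.rank_le_of_injective hinj) (Module.rank_lt_aleph0 D R)
  have hrange : ℵ₀ ≤ Module.rank D (LinearMap.range φ) := by
    have hsum := LinearMap.rank_range_add_rank_ker φ
    by_contra h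
    push_neg at h
    have : Module.rank D (LinearMap.range φ) + Module.rank D (LinearMap.ker φ) < ℵ₀ :=
      Cardinal.add_lt_aleph0 h hkerφ
    rw [hsum] at this
    exact absurd hK (not_le.mpr this)
  have hm : (m : Cardinal) ≤ Module.rank D (LinearMap.range φ) :=
    le_trans (le_of_lt (Cardinal.nat_lt_aleph0 m)) hrange
  haveI : Module.Free D (LinearMap.range φ) := Module.Free.of_divisionRing D _
  obtain ⟨s, hcard, hind⟩ := _root_.le_rank_iff_exists_linearIndependent_finset.mp hm
  -- lift the independent family from `V ⧸ R` back to `K`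
  have hmem : ∀ x : ↥(s : Set (LinearMap.range φ)), ((x : LinearMap.range φ) : V ⧸ R)
      ∈ LinearMap.range φ := fun x => (x : LinearMap.range φ).2
  choose k hk using hmem
  set v : ↥(s : Set (LinearMap.range φ)) → V := fun x => ((k x : K) : V) with hv
  have hmk : ∀ x, R.mkQ (v x) = ((x : LinearMap.range φ) : V ⧸ R) := by
    intro x
    simpa [hφ, hv] using hk x
  have h1 : LinearIndependent D
      (fun x : ↥(s : Set (LinearMap.range φ)) => ((x : LinearMap.range φ) : V ⧸ R)) :=
    hind.map' (LinearMap.range φ).subtype (Submodule.ker_subtype _)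
  have h2 : LinearIndependent D (R.mkQ ∘ v) := by
    have : (R.mkQ ∘ v) =
        fun x : ↥(s : Set (LinearMap.range φ)) => ((x : LinearMap.range φ) : V ⧸ R) := by
      funext x; exact hmk x
    rw [this]; exact h1
  have hvind : LinearIndependent D v := h2.of_comp R.mkQ
  refine ⟨Submodule.span D (Set.range v), ?_, ?_, ?_, ?_⟩
  · rw [Submodule.span_le]
    rintro _ ⟨x, rfl⟩
    exact (k x).2
  · exact FiniteDimensional.span_of_finite D (Set.finite_range v)
  · rw [finrank_span_eq_card hvind]
    simpa using hcard
  · rw [disjoint_def]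
    intro x hx hxR
    rw [mem_span_range_iff_exists_fun] at hx
    obtain ⟨c, hc⟩ := hx
    have h0 : R.mkQ x = 0 := by
      rwa [← Submodule.Quotient.mk_eq_zero, ← Submodule.mkQ_apply] at hxR
    have hc0 : ∀ i, c i = 0 := by
      have hsum : (∑ i, c i • R.mkQ (v i)) = 0 := by
        rw [← h0, ← hc, map_sum]
        simp
      exact Fintype.linearIndependent_iff.mp h2 c (by simpa using hsum)
    rw [← hc]
    simp [hc0]

end Aux

/-- Let `D` be a division ring and `V = ℕ →₀ D` the free left
`D`-module on countably many generators. Every finite-rank `D`-linear endomorphism `A`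
of `V` can be written as `A = (B∘C − C∘B)∘(E∘G − G∘E)` for finite-rank endomorphisms
`B, C, E, G` (composition is multiplication in `Module.End D V`). -/
theorem stmt_12 (D : Type*) [DivisionRing D]
    (A : Module.End D (ℕ →₀ D)) (hA : Module.Finite D (LinearMap.range A)) :
    ∃ B C E G : Module.End D (ℕ →₀ D),
      Module.Finite D (LinearMap.range B) ∧
      Module.Finite D (LinearMap.range C) ∧
      Module.Finite D (LinearMap.range E) ∧
      Module.Finite D (LinearMap.range G) ∧
      A = (B * C - C * B) * (E * G - G * E) := by
  classical
  haveI := hA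
  set R : Submodule D (ℕ →₀ D) := LinearMap.range A with hR
  set K : Submodule D (ℕ →₀ D) := LinearMap.ker A with hK
  obtain ⟨U, hKU⟩ := Submodule.exists_isCompl K
  have hUK : IsCompl U K := hKU.symm
  -- U is finite dimensional, isomorphic to the range of A
  have eU : ((ℕ →₀ D) ⧸ K) ≃ₗ[D] U := Submodule.quotientEquivOfIsCompl K U hKU
  have eRA : ((ℕ →₀ D) ⧸ K) ≃ₗ[D] R := A.quotKerEquivRange
  haveI hQfin : Module.Finite D ((ℕ →₀ D) ⧸ K) := Module.Finite.equiv eRA.symm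
  haveI hUfin : Module.Finite D U := Module.Finite.equiv eU
  -- K has infinite rank
  have hrankV : Module.rank D (ℕ →₀ D) = ℵ₀ := by
    rw [rank_finsupp_self]
    simp
  have hKrank : ℵ₀ ≤ Module.rank D K := by
    have hq := rank_quotient_add_rank_of_divisionRing K
    rw [hrankV] at hq
    by_contra h
    push_neg at h
    have : Module.rank D ((ℕ →₀ D) ⧸ K) + Module.rank D K < ℵ₀ :=
      Cardinal.add_lt_aleph0 (Module.rank_lt_aleph0 D _) h
    rw [hq] at this
    exact lt_irrefl _ this
  obtain ⟨B1, hB1K, hB1fin, hB1rank, hB1R⟩ :=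
    aux_exists_sub_disjoint K R hKrank (Module.finrank D U)
  haveI := hB1fin
  obtain ⟨W, hBW, hRW⟩ := aux_exists_isCompl_ge B1 R hB1R
  haveI : Module.Free D U := Module.Free.of_divisionRing D U
  haveI : Module.Free D B1 := Module.Free.of_divisionRing D B1
  obtain ⟨s⟩ := FiniteDimensional.nonempty_linearEquiv_of_finrank_eq
    (R := D) (M := U) (M' := B1) hB1rank.symm
  set πU : (ℕ →₀ D) →ₗ[D] U := Submodule.linearProjOfIsCompl U K hUK with hπU
  set πB : (ℕ →₀ D) →ₗ[D] B1 := Submodule.linearProjOfIsCompl B1 W hBW with hπB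
  set Bop : Module.End D (ℕ →₀ D) := (A ∘ₗ U.subtype ∘ₗ s.symm.toLinearMap) ∘ₗ πB with hBop
  set Cop : Module.End D (ℕ →₀ D) := B1.subtype ∘ₗ πB with hCop
  set Eop : Module.End D (ℕ →₀ D) := (B1.subtype ∘ₗ s.toLinearMap) ∘ₗ πU with hEop
  set Gop : Module.End D (ℕ →₀ D) := U.subtype ∘ₗ πU with hGop
  have e1 : Bop * Cop = Bop := by
    refine LinearMap.ext fun x => ?_
    have hb : πB (B1.subtype (πB x)) = πB x := by
      rw [hπB]; exact Submodule.linearProjOfIsCompl_apply_left hBW _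
    show A (U.subtype (s.symm (πB (B1.subtype (πB x))))) = A (U.subtype (s.symm (πB x)))
    rw [hb]
  have e2 : Cop * Bop = 0 := by
    refine LinearMap.ext fun x => ?_
    have hmem : Bop x ∈ W := hRW ⟨U.subtype (s.symm (πB x)), rfl⟩
    have hz : πB (Bop x) = 0 := by
      rw [hπB]; exact Submodule.projectionOnto_apply_of_mem_right hBW hmem
    show B1.subtype (πB (Bop x)) = 0
    rw [hz]; exact map_zero B1.subtype
  have e3 : Eop * Gop = Eop := by
    refine LinearMap.ext fun x => ?_
    have hu : πU (U.subtype (πU x)) = πU x := by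
      rw [hπU]; exact Submodule.linearProjOfIsCompl_apply_left hUK _
    show B1.subtype (s (πU (U.subtype (πU x)))) = B1.subtype (s (πU x))
    rw [hu]
  have e4 : Gop * Eop = 0 := by
    refine LinearMap.ext fun x => ?_
    have hmem : Eop x ∈ K := hB1K (s (πU x)).2
    have hz : πU (Eop x) = 0 := by
      rw [hπU]; exact Submodule.projectionOnto_apply_of_mem_right hUK hmem
    show U.subtype (πU (Eop x)) = 0
    rw [hz]; exact map_zero U.subtype
  have e5 : Bop * Eop = A := by
    refine LinearMap.ext fun x => ?_
    have h1 : πB (B1.subtype (s (πU x))) = s (πU x) := by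
      rw [hπB]; exact Submodule.linearProjOfIsCompl_apply_left hBW _
    have h2 : x - ((πU x : U) : ℕ →₀ D) ∈ K := by
      have h3 := Submodule.projection_add_projection_eq_self hUK x
      have h4 : x - ((πU x : U) : ℕ →₀ D) =
          ((K.projectionOnto U hUK.symm x : K) : ℕ →₀ D) := by
        rw [hπU, eq_comm, eq_sub_iff_add_eq, add_comm]
        exact h3
      rw [h4]
      exact Submodule.coe_mem _
    have h5 : A ((πU x : U) : ℕ →₀ D) = A x := by
      have h6 : A (x - ((πU x : U) : ℕ →₀ D)) = 0 := h2
      rw [map_sub, sub_eq_zero] at h6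
      exact h6.symm
    calc (Bop * Eop) x = A (U.subtype (s.symm (πB (B1.subtype (s (πU x)))))) := rfl
      _ = A (U.subtype (πU x)) := by rw [h1, LinearEquiv.symm_apply_apply]
      _ = A x := h5
  refine ⟨Bop, Cop, Eop, Gop, ?_, ?_, ?_, ?_, ?_⟩
  · have hle : LinearMap.range Bop ≤ R := by
      rintro _ ⟨x, rfl⟩
      exact ⟨_, rfl⟩
    exact Submodule.finiteDimensional_of_le hle
  · have hle : LinearMap.range Cop ≤ B1 := by
      rintro _ ⟨x, rfl⟩
      exact Submodule.coe_mem _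
    exact Submodule.finiteDimensional_of_le hle
  · have hle : LinearMap.range Eop ≤ B1 := by
      rintro _ ⟨x, rfl⟩
      exact Submodule.coe_mem _
    exact Submodule.finiteDimensional_of_le hle
  · have hle : LinearMap.range Gop ≤ U := by
      rintro _ ⟨x, rfl⟩
      exact Submodule.coe_mem _
    exact Submodule.finiteDimensional_of_le hle
  · rw [e1, e2, e3, e4]
    rw [show Bop - 0 = Bop from sub_zero Bop, show Eop - 0 = Eop from sub_zero Eop, e5]
end

section
/- Let D be a division ring and let n > 1 be an integer. Let U ∈ M_n(D) be a unitriangular matrix (i.e., U is upper triangular or lower triangular with all diagonal entries equal to 1), and let H = diag(a₁,…,a_n) be a diagonal matrix such that a₁,…,a_{n−1} lie in the center of D and the elements a₁,…,a_n are pairwise distinct. Then there exist invertible matrices P, Q ∈ M_n(D) such that P⁻¹·(H·U)·P = H and Q⁻¹·(U·H)·Q = H. -/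
/-!
An upper triangular matrix `M` with distinct diagonal entries `a i` is diagonalised by the matrix
whose `j`-th column `v` is an eigenvector for `a j` (acting on the right): `v j = 1`, `v i = 0`
for `i > j`, and the entries above `j` are found by back substitution, the `i`-th row of
`M v = v a j` reading `v i * a j - a i * v i = ∑_{k > i} M i k * v k`. Over a division ring an
equation `x * b - a * x = c` is solvable as soon as `a ≠ b` and one of `a`, `b` is central. The
resulting matrix is upper unitriangular, hence invertible. The lower triangular case is the upper
one for the reversed order.
-/

open Matrix Finset

theorem exists_mul_sub_mul_eq {D : Type*} [DivisionRing D] {a b : D} (hab : a ≠ b)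
    (hcen : a ∈ Subring.center D ∨ b ∈ Subring.center D) (c : D) :
    ∃ x, x * b - a * x = c := by
  have hba : b - a ≠ 0 := sub_ne_zero.2 hab.symm
  rcases hcen with ha | hb
  · refine ⟨c * (b - a)⁻¹, ?_⟩
    rw [← Subring.mem_center_iff.1 ha, ← mul_sub, inv_mul_cancel_right₀ hba]
  · refine ⟨(b - a)⁻¹ * c, ?_⟩
    rw [Subring.mem_center_iff.1 hb, ← sub_mul, mul_inv_cancel_left₀ hba]

namespace Matrix

variable {ι R : Type*} [Fintype ι] [LinearOrder ι]

theorem isNilpotent_of_strictUpperTriangular [Semiring R] {N : Matrix ι ι R}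
    (hN : ∀ ⦃i j⦄, j ≤ i → N i j = 0) : IsNilpotent N := by
  have hchain : ∀ k i j, (N ^ k) i j ≠ 0 → k ≤ #{l | i < l} := by
    intro k
    induction k with
    | zero => simp
    | succ k ih =>
      intro i j h
      rw [pow_succ', mul_apply] at h
      obtain ⟨l, -, hl⟩ := exists_ne_zero_of_sum_ne_zero h
      have hil : i < l := not_le.1 fun hle => hl (by rw [hN hle, zero_mul])
      have hlt : #{m | l < m} < #{m | i < m} :=
        card_lt_card <| (ssubset_iff_of_subset fun m hm => by
          simp only [mem_filter, mem_univ, true_and] at hm ⊢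
          exact hil.trans hm).2 ⟨l, by simpa using hil, by simp⟩
      have := ih l j (right_ne_zero_of_mul hl)
      omega
  refine ⟨Fintype.card ι, ext fun i j => by_contra fun h => ?_⟩
  have hlt : #{l | i < l} < Fintype.card ι :=
    card_lt_univ_of_notMem (s := {l | i < l}) (x := i) (by simp)
  exact (hchain _ i j h).not_gt hlt

theorem isUnit_of_upperUnitriangular [Ring R] {N : Matrix ι ι R} (hN : N.IsUpperTriangular)
    (hN1 : ∀ i, N i i = 1) : IsUnit N := by
  have hnil : IsNilpotent (N - 1) := isNilpotent_of_strictUpperTriangular fun i j hji => by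
    rcases hji.lt_or_eq with hlt | rfl
    · rw [sub_apply, hN hlt, one_apply_ne hlt.ne', sub_zero]
    · rw [sub_apply, hN1, one_apply_eq, sub_self]
  simpa using hnil.isUnit_one_add

end Matrix

section Eigenvector

variable {ι D : Type*} [Fintype ι] [LinearOrder ι] [DivisionRing D]

noncomputable def triangularEigenvector (M : Matrix ι ι D) (a : ι → D) (j : ι) : ι → D :=
  wellFounded_gt.fix fun i v =>
    if i = j then 1
    else if i < j then
      Classical.epsilon fun x => x * a j - a i * x = ∑ k, if h : i < k then M i k * v k h else 0
    else 0

variable {M : Matrix ι ι D} {a : ι → D} {i j : ι}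

theorem triangularEigenvector_apply :
    triangularEigenvector M a j i =
      if i = j then 1
      else if i < j then
        Classical.epsilon fun x => x * a j - a i * x =
          ∑ k, if i < k then M i k * triangularEigenvector M a j k else 0
      else 0 := by
  rw [triangularEigenvector, WellFounded.fix_eq]
  simp only [dite_eq_ite]

theorem triangularEigenvector_self : triangularEigenvector M a j j = 1 := by
  rw [triangularEigenvector_apply, if_pos rfl]

theorem triangularEigenvector_of_lt (h : j < i) : triangularEigenvector M a j i = 0 := by
  rw [triangularEigenvector_apply, if_neg h.ne', if_neg h.not_gt]

theorem triangularEigenvector_spec (h : i < j) (ha : a i ≠ a j)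
    (hcen : a i ∈ Subring.center D ∨ a j ∈ Subring.center D) :
    triangularEigenvector M a j i * a j - a i * triangularEigenvector M a j i =
      ∑ k, if i < k then M i k * triangularEigenvector M a j k else 0 := by
  rw [triangularEigenvector_apply (i := i), if_neg h.ne, if_pos h]
  exact Classical.epsilon_spec (exists_mul_sub_mul_eq ha hcen _)

theorem Matrix.IsUpperTriangular.mulVec_apply (hM : M.IsUpperTriangular) (v : ι → D) (i : ι) :
    (M *ᵥ v) i = M i i * v i + ∑ k, if i < k then M i k * v k else 0 := by
  have hsplit : ∀ k, M i k * v k =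
      (if i = k then M i i * v i else 0) + (if i < k then M i k * v k else 0) := by
    intro k
    rcases lt_trichotomy i k with h | rfl | h
    · rw [if_neg h.ne, if_pos h, zero_add]
    · rw [if_pos rfl, if_neg (lt_irrefl i), add_zero]
    · rw [if_neg h.ne', if_neg h.not_gt, hM h, zero_mul, add_zero]
  rw [mulVec, dotProduct, sum_congr rfl fun k _ => hsplit k, sum_add_distrib, sum_ite_eq,
    if_pos (mem_univ i)]

theorem mulVec_triangularEigenvector (hM : M.IsUpperTriangular) (hdiag : ∀ i, M i i = a i)
    (ha : Function.Injective a)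
    (hcen : ∀ i j, i ≠ j → a i ∈ Subring.center D ∨ a j ∈ Subring.center D) (i : ι) :
    (M *ᵥ triangularEigenvector M a j) i = triangularEigenvector M a j i * a j := by
  rw [hM.mulVec_apply, hdiag]
  rcases lt_or_ge i j with h | h
  · rw [← triangularEigenvector_spec h (ha.ne h.ne) (hcen i j h.ne)]
    abel
  · have hzero : ∀ k, i < k → triangularEigenvector M a j k = 0 :=
      fun k hk => triangularEigenvector_of_lt (h.trans_lt hk)
    rw [sum_eq_zero fun k _ => ite_eq_right_iff.2 fun hk => by rw [hzero k hk, mul_zero]]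
    rcases h.lt_or_eq with h | rfl
    · simp [triangularEigenvector_of_lt h]
    · simp [triangularEigenvector_self]

end Eigenvector

section Diagonalization

variable {ι D : Type*} [Fintype ι] [LinearOrder ι] [DivisionRing D]

theorem Matrix.IsUpperTriangular.exists_units_conj_eq_diagonal {M : Matrix ι ι D}
    (hM : M.IsUpperTriangular) {a : ι → D} (hdiag : ∀ i, M i i = a i)
    (ha : Function.Injective a)
    (hcen : ∀ i j, i ≠ j → a i ∈ Subring.center D ∨ a j ∈ Subring.center D) :
    ∃ P : (Matrix ι ι D)ˣ, (↑P⁻¹ : Matrix ι ι D) * M * P = diagonal a := by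
  let P : Matrix ι ι D := of fun i j => triangularEigenvector M a j i
  have hP : IsUnit P :=
    isUnit_of_upperUnitriangular (fun _ _ h => triangularEigenvector_of_lt h)
      fun _ => triangularEigenvector_self
  have hMP : M * P = P * diagonal a := ext fun i j => by
    rw [mul_diagonal]
    exact mulVec_triangularEigenvector hM hdiag ha hcen i
  exact ⟨hP.unit, by rw [mul_assoc, Units.inv_mul_eq_iff_eq_mul, hP.unit_spec, hMP]⟩

theorem Matrix.IsLowerTriangular.exists_units_conj_eq_diagonal {M : Matrix ι ι D}
    (hM : M.IsLowerTriangular) {a : ι → D} (hdiag : ∀ i, M i i = a i)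
    (ha : Function.Injective a)
    (hcen : ∀ i j, i ≠ j → a i ∈ Subring.center D ∨ a j ∈ Subring.center D) :
    ∃ P : (Matrix ι ι D)ˣ, (↑P⁻¹ : Matrix ι ι D) * M * P = diagonal a :=
  IsUpperTriangular.exists_units_conj_eq_diagonal (ι := ιᵒᵈ) hM hdiag ha hcen

theorem Matrix.exists_units_conj_eq_diagonal_of_isTriangular {M : Matrix ι ι D}
    (hM : M.IsUpperTriangular ∨ M.IsLowerTriangular) {a : ι → D} (hdiag : ∀ i, M i i = a i)
    (ha : Function.Injective a)
    (hcen : ∀ i j, i ≠ j → a i ∈ Subring.center D ∨ a j ∈ Subring.center D) :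
    ∃ P : (Matrix ι ι D)ˣ, (↑P⁻¹ : Matrix ι ι D) * M * P = diagonal a :=
  hM.elim (IsUpperTriangular.exists_units_conj_eq_diagonal · hdiag ha hcen)
    (IsLowerTriangular.exists_units_conj_eq_diagonal · hdiag ha hcen)

end Diagonalization

theorem exists_mul_eq_one_of_exists_units_conj {R : Type*} [Monoid R] {x y : R}
    (h : ∃ u : Rˣ, ↑u⁻¹ * x * u = y) : ∃ p q : R, p * q = 1 ∧ q * p = 1 ∧ q * x * p = y :=
  let ⟨u, hu⟩ := h
  ⟨u, ↑u⁻¹, u.mul_inv, u.inv_mul, hu⟩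

theorem stmt_13_general (D : Type*) [DivisionRing D] (n : ℕ)
    (U : Matrix (Fin n) (Fin n) D)
    (hU : (∀ i j : Fin n, j < i → U i j = 0) ∨ (∀ i j : Fin n, i < j → U i j = 0))
    (hU1 : ∀ i : Fin n, U i i = 1)
    (a : Fin n → D)
    (hcen : ∀ i : Fin n, (i : ℕ) < n - 1 → a i ∈ Subring.center D)
    (hdist : Function.Injective a) :
    (∃ P P' : Matrix (Fin n) (Fin n) D, P * P' = 1 ∧ P' * P = 1 ∧
        P' * (Matrix.diagonal a * U) * P = Matrix.diagonal a) ∧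
      (∃ Q Q' : Matrix (Fin n) (Fin n) D, Q * Q' = 1 ∧ Q' * Q = 1 ∧
        Q' * (U * Matrix.diagonal a) * Q = Matrix.diagonal a) := by
  have hcen' : ∀ i j : Fin n, i ≠ j → a i ∈ Subring.center D ∨ a j ∈ Subring.center D := by
    intro i j hij
    rcases hij.lt_or_gt with h | h
    · exact .inl (hcen i (by omega))
    · exact .inr (hcen j (by omega))
  have hHU : ∀ i, (diagonal a * U) i i = a i := fun i => by rw [diagonal_mul, hU1, mul_one]
  have hUH : ∀ i, (U * diagonal a) i i = a i := fun i => by rw [mul_diagonal, hU1, one_mul]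
  have hU : U.IsUpperTriangular ∨ U.IsLowerTriangular := hU
  refine ⟨exists_mul_eq_one_of_exists_units_conj <|
      exists_units_conj_eq_diagonal_of_isTriangular ?_ hHU hdist hcen',
    exists_mul_eq_one_of_exists_units_conj <|
      exists_units_conj_eq_diagonal_of_isTriangular ?_ hUH hdist hcen'⟩
  · exact hU.imp (BlockTriangular.mul (blockTriangular_diagonal a))
      (BlockTriangular.mul (blockTriangular_diagonal a))
  · exact hU.imp (BlockTriangular.mul · (blockTriangular_diagonal a))
      (BlockTriangular.mul · (blockTriangular_diagonal a))

/-- Let `D` be a division ring, `n > 1`, `U` a (lower or upper)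
unitriangular matrix, and `H = diag(a₁,…,aₙ)` with `a₁,…,a_{n−1}` central and
`a₁,…,aₙ` pairwise distinct. Then `H·U` and `U·H` are both similar to `H`. -/
theorem stmt_13 (D : Type*) [DivisionRing D] (n : ℕ) (hn : 1 < n)
    (U : Matrix (Fin n) (Fin n) D)
    (hU : (∀ i j : Fin n, j < i → U i j = 0) ∨ (∀ i j : Fin n, i < j → U i j = 0))
    (hU1 : ∀ i : Fin n, U i i = 1)
    (a : Fin n → D)
    (hcen : ∀ i : Fin n, (i : ℕ) < n - 1 → a i ∈ Subring.center D)
    (hdist : Function.Injective a) :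
    (∃ P P' : Matrix (Fin n) (Fin n) D, P * P' = 1 ∧ P' * P = 1 ∧
        P' * (Matrix.diagonal a * U) * P = Matrix.diagonal a) ∧
      (∃ Q Q' : Matrix (Fin n) (Fin n) D, Q * Q' = 1 ∧ Q' * Q = 1 ∧
        Q' * (U * Matrix.diagonal a) * Q = Matrix.diagonal a) :=
  stmt_13_general D n U hU hU1 a hcen hdist
end
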